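/- Let c ∈ ℝ, T > 0, and let α₁, α₂ be T-periodic essentially bounded functions with α₁ ≪ α₂ ≪ (2π)²/T² + c²/4 (pointwise a.e. inequality, strict on a positive-measure set). Then the equations x'' + c x' + α₁(t)x = 0 and x'' + c x' + α₂(t)x = 0 cannot both admit nontrivial T-periodic solutions. -/

import Mathlib

/-!
Put `ω = 2π/T`. Comparing a solution of `x'' + c x' + α x = 0` with `α ≤ ω² + c²/4` against
`e^{-ct/2} sin (ω (t - a))` through the damped Wronskian `e^{ct} (x₁ x₂' - x₁' x₂)`, whose
derivative is `e^{ct} (α₁ - α₂) x₁ x₂`, shows that consecutive zeros are at least `π/ω = T/2`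
apart, with equality only if `α = ω² + c²/4` a.e. between them. A nontrivial `T`-periodic solution
with a zero has simple zeros, and a single zero per period is impossible since `x'` takes the same
value at `t₀` and `t₀ + T`; so there are exactly two zeros per period at distance `T/2`, which
forces `α = ω² + c²/4` a.e. Hence both solutions have no zeros, and may be taken with `x₁ x₂ > 0`.
Then the damped Wronskian of `x₂, x₁` is nondecreasing, vanishes at a critical point of `x₂ / x₁`
and one period later, hence is constant in between, which forces `α₁ = α₂` a.e.
-/

open Real MeasureTheory Set Filter Topology

theorem IsPreconnected.forall_pos_or_forall_neg {X : Type*} [TopologicalSpace X] {s : Set X}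
    (hs : IsPreconnected s) {f : X → ℝ} (hf : ContinuousOn f s) (hne : ∀ x ∈ s, f x ≠ 0) :
    (∀ x ∈ s, 0 < f x) ∨ (∀ x ∈ s, f x < 0) := by
  by_contra! h
  obtain ⟨⟨a, ha, hfa⟩, ⟨b, hb, hfb⟩⟩ := h
  obtain ⟨x, hx, hfx⟩ := hs.intermediate_value₂ ha hb hf continuousOn_const hfa hfb
  exact hne x hx hfx

theorem le_of_ae_le_of_isOpen {f g : ℝ → ℝ} (hf : Continuous f) (hg : Continuous g) {s : Set ℝ}
    (hs : IsOpen s) (h : ∀ᵐ t, t ∈ s → f t ≤ g t) : ∀ t ∈ s, f t ≤ g t := by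
  intro t ht
  by_contra! hlt
  have hnull : volume (s ∩ {u | g u < f u}) = 0 :=
    measure_mono_null (fun u ⟨hu, hlt⟩ ↦ fun hle ↦ (hle hu).not_gt hlt) (ae_iff.1 h)
  rw [(hs.inter (isOpen_lt hg hf)).measure_eq_zero_iff volume] at hnull
  exact hnull.subset ⟨ht, hlt⟩

theorem not_ae_eq_of_measure_pos {f g : ℝ → ℝ} {s : Set ℝ}
    (h : 0 < volume {t ∈ s | f t < g t}) : ¬ ∀ᵐ t, f t = g t := fun hfg ↦
  h.ne' (measure_mono_null (fun _ ht ↦ ht.2.ne) (ae_iff.1 hfg))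

theorem Function.Periodic.ae_of_ae_Ioo {p : ℝ → Prop} {T : ℝ} (hp : Function.Periodic p T)
    (hT : 0 < T) (a : ℝ) (h : ∀ᵐ t, t ∈ Ioo a (a + T) → p t) : ∀ᵐ t, p t := by
  have hIoc : ∀ᵐ t, t ∈ Ioc a (a + T) → p t := by
    filter_upwards [h, compl_mem_ae_iff.2 (measure_singleton (a + T))] with t ht hne hmem
    exact ht ⟨hmem.1, lt_of_le_of_ne hmem.2 hne⟩
  have htranslate : ∀ n : ℤ, ∀ᵐ t, t ∈ Ioc (a + n • T) (a + (n + 1) • T) → p t := by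
    intro n
    filter_upwards [(measurePreserving_sub_right volume (n • T)).quasiMeasurePreserving.ae hIoc]
      with t ht hmem
    rw [← hp.sub_zsmul_eq n]
    refine ht ⟨?_, ?_⟩ <;> linarith [hmem.1, hmem.2, add_smul (n : ℤ) 1 T, one_smul ℤ T]
  filter_upwards [ae_all_iff.2 htranslate] with t ht
  obtain ⟨n, hn⟩ := mem_iUnion.1 ((iUnion_Ioc_add_zsmul hT a).symm ▸ mem_univ t)
  exact ht n hn

theorem exists_first_zero {f : ℝ → ℝ} (hf : Continuous f) {a c : ℝ} (hac : a < c) (hfc : f c = 0)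
    (hne : ∀ᶠ t in 𝓝[>] a, f t ≠ 0) : ∃ b ∈ Ioc a c, f b = 0 ∧ ∀ t ∈ Ioo a b, f t ≠ 0 := by
  obtain ⟨d, hd, hsub⟩ := mem_nhdsGT_iff_exists_Ioo_subset.1 hne
  have hdc : d ≤ c := not_lt.1 fun hcd ↦ hsub ⟨hac, hcd⟩ hfc
  set S := Icc d c ∩ {t | f t = 0}
  have hbdd : BddBelow S := bddBelow_Icc.mono inter_subset_left
  obtain ⟨⟨hdb, hbc⟩, hfb⟩ : sInf S ∈ S :=
    (isClosed_Icc.inter (isClosed_eq hf continuous_const)).csInf_mem ⟨c, ⟨hdc, le_rfl⟩, hfc⟩ hbdd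
  refine ⟨sInf S, ⟨hd.trans_le hdb, hbc⟩, hfb, fun t ht hft ↦ ?_⟩
  by_cases htd : t < d
  · exact hsub ⟨ht.1, htd⟩ hft
  · exact ht.2.not_ge (csInf_le hbdd ⟨⟨not_lt.1 htd, (ht.2.trans_le hbc).le⟩, hft⟩)

theorem HasDerivAt.nonneg_of_eq_zero_of_pos_Ioo {f : ℝ → ℝ} {f' a b : ℝ} (hf : HasDerivAt f f' a)
    (hab : a < b) (hfa : f a = 0) (hpos : ∀ t ∈ Ioo a b, 0 < f t) : 0 ≤ f' := by
  refine ge_of_tendsto ((hasDerivWithinAt_iff_tendsto_slope' self_notMem_Ioi).1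
    hf.hasDerivWithinAt) ?_
  filter_upwards [Ioo_mem_nhdsGT hab] with t ht
  rw [slope_def_field, hfa, sub_zero]
  exact (div_pos (hpos t ht) (sub_pos.2 ht.1)).le

theorem HasDerivAt.nonpos_of_eq_zero_of_pos_Ioo {f : ℝ → ℝ} {f' a b : ℝ} (hf : HasDerivAt f f' b)
    (hab : a < b) (hfb : f b = 0) (hpos : ∀ t ∈ Ioo a b, 0 < f t) : f' ≤ 0 := by
  refine le_of_tendsto ((hasDerivWithinAt_iff_tendsto_slope' self_notMem_Iio).1
    hf.hasDerivWithinAt) ?_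
  filter_upwards [Ioo_mem_nhdsLT hab] with t ht
  rw [slope_def_field, hfb, sub_zero]
  exact (div_neg_of_pos_of_neg (hpos t ht) (sub_neg.2 ht.2)).le

theorem mul_nonpos_of_hasDerivAt_of_ne_zero_Ioo {f : ℝ → ℝ} {fa fb a b : ℝ}
    (ha : HasDerivAt f fa a) (hb : HasDerivAt f fb b) (hf : ContinuousOn f (Ioo a b)) (hab : a < b)
    (hfa : f a = 0) (hfb : f b = 0) (hne : ∀ t ∈ Ioo a b, f t ≠ 0) : fa * fb ≤ 0 := by
  rcases isPreconnected_Ioo.forall_pos_or_forall_neg hf hne with hpos | hneg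
  · exact mul_nonpos_of_nonneg_of_nonpos (ha.nonneg_of_eq_zero_of_pos_Ioo hab hfa hpos)
      (hb.nonpos_of_eq_zero_of_pos_Ioo hab hfb hpos)
  · have hpos' : ∀ t ∈ Ioo a b, 0 < -f t := fun t ht ↦ neg_pos.2 (hneg t ht)
    have h₁ := ha.neg.nonneg_of_eq_zero_of_pos_Ioo hab (by simp [hfa]) hpos'
    have h₂ := hb.neg.nonpos_of_eq_zero_of_pos_Ioo hab (by simp [hfb]) hpos'
    nlinarith

theorem eq_zero_of_norm_deriv_le_mul_norm {E : Type*} [NormedAddCommGroup E] [NormedSpace ℝ E]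
    {f f' : ℝ → E} {K t₀ : ℝ} (hf : ∀ t, HasDerivAt f (f' t) t)
    (hbound : ∀ t, ‖f' t‖ ≤ K * ‖f t‖) (h₀ : f t₀ = 0) (t : ℝ) : f t = 0 := by
  have hcont : Continuous f := continuous_iff_continuousAt.2 fun t ↦ (hf t).continuousAt
  rcases le_total t₀ t with h | h
  · exact eq_zero_of_abs_deriv_le_mul_abs_self_of_eq_zero_right hcont.continuousOn
      (fun s _ ↦ (hf s).hasDerivWithinAt) h₀ (fun s _ ↦ hbound s) t ⟨h, le_rfl⟩
  · have hrefl : ∀ s, HasDerivAt (fun s ↦ f (-s)) (-f' (-s)) s := fun s ↦ by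
      simpa [Function.comp_def] using (hf (-s)).scomp s (hasDerivAt_neg s)
    simpa using eq_zero_of_abs_deriv_le_mul_abs_self_of_eq_zero_right
      (hcont.comp continuous_neg).continuousOn (fun s _ ↦ (hrefl s).hasDerivWithinAt)
      (by simpa using h₀) (fun s _ ↦ by simpa using hbound (-s)) (-t) ⟨neg_le_neg h, le_rfl⟩

theorem Function.Periodic.deriv {f : ℝ → ℝ} {T : ℝ} (hf : Function.Periodic f T) :
    Function.Periodic (deriv f) T := fun t ↦ by
  rw [← deriv_comp_add_const, hf.funext]

structure IsDampedHillSolution (c : ℝ) (α x : ℝ → ℝ) : Prop where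
  contDiff : ContDiff ℝ 2 x
  ode : ∀ᵐ t, deriv (deriv x) t + c * deriv x t + α t * x t = 0

namespace IsDampedHillSolution

variable {c : ℝ} {α x : ℝ → ℝ}

theorem contDiff_deriv (h : IsDampedHillSolution c α x) : ContDiff ℝ 1 (deriv x) :=
  (contDiff_succ_iff_deriv.1 h.contDiff).2.2

theorem differentiable (h : IsDampedHillSolution c α x) : Differentiable ℝ x :=
  h.contDiff.differentiable two_ne_zero

theorem differentiable_deriv (h : IsDampedHillSolution c α x) : Differentiable ℝ (deriv x) :=
  h.contDiff_deriv.differentiable one_ne_zero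

theorem continuous_deriv_deriv (h : IsDampedHillSolution c α x) : Continuous (deriv (deriv x)) :=
  h.contDiff_deriv.continuous_deriv le_rfl

theorem neg (h : IsDampedHillSolution c α x) : IsDampedHillSolution c α (-x) where
  contDiff := h.contDiff.neg
  ode := by
    filter_upwards [h.ode] with t ht
    simp only [deriv.neg', deriv.fun_neg', Pi.neg_apply]
    linarith

theorem exp_mul (h : IsDampedHillSolution c α x) (k : ℝ) :
    IsDampedHillSolution (c - 2 * k) (fun t ↦ α t - c * k + k ^ 2) (fun t ↦ exp (k * t) * x t) := by
  have hexp : ∀ t, HasDerivAt (fun t ↦ exp (k * t)) (exp (k * t) * k) t := fun t ↦ by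
    simpa using ((hasDerivAt_id t).const_mul k).exp
  have hderiv : deriv (fun t ↦ exp (k * t) * x t) = fun t ↦ exp (k * t) * (k * x t + deriv x t) :=
    funext fun t ↦ ((hexp t).mul (h.differentiable t).hasDerivAt).deriv.trans (by ring)
  have hderiv2 : ∀ t, deriv (deriv (fun t ↦ exp (k * t) * x t)) t =
      exp (k * t) * (k * (k * x t + deriv x t) + (k * deriv x t + deriv (deriv x) t)) := fun t ↦ by
    rw [hderiv]
    exact ((hexp t).mul (((h.differentiable t).hasDerivAt.const_mul k).add
      (h.differentiable_deriv t).hasDerivAt)).deriv.trans (by simp only [Pi.add_apply]; ring)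
  refine ⟨(contDiff_const.mul contDiff_id).exp.mul h.contDiff, ?_⟩
  filter_upwards [h.ode] with t ht
  rw [hderiv2, hderiv]
  linear_combination exp (k * t) * ht

theorem sin (ω a : ℝ) :
    IsDampedHillSolution 0 (fun _ ↦ ω ^ 2) (fun t ↦ Real.sin (ω * (t - a))) := by
  have hlin : ∀ t, HasDerivAt (fun t ↦ ω * (t - a)) ω t := fun t ↦ by
    simpa using ((hasDerivAt_id t).sub_const a).const_mul ω
  have hderiv : deriv (fun t ↦ Real.sin (ω * (t - a))) = fun t ↦ Real.cos (ω * (t - a)) * ω :=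
    funext fun t ↦ ((hlin t).sin).deriv
  refine ⟨by fun_prop, Eventually.of_forall fun t ↦ ?_⟩
  rw [hderiv, ((hlin t).cos.mul_const ω).deriv]
  ring

end IsDampedHillSolution

namespace IsDampedHillSolution

variable {c : ℝ} {α x : ℝ → ℝ}

theorem eq_zero_of_deriv_eq_zero (h : IsDampedHillSolution c α x) {C : ℝ}
    (hbdd : ∀ᵐ t, |α t| ≤ C) {t₀ : ℝ} (h₀ : x t₀ = 0) (h₀' : deriv x t₀ = 0) : x = 0 := by
  have hacc : ∀ t, |deriv (deriv x) t + c * deriv x t| ≤ |C| * |x t| := by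
    have hcont₁ : Continuous fun t ↦ |deriv (deriv x) t + c * deriv x t| :=
      (h.continuous_deriv_deriv.add (continuous_const.mul h.differentiable_deriv.continuous)).abs
    have hcont₂ : Continuous fun t ↦ |C| * |x t| := continuous_const.mul h.contDiff.continuous.abs
    refine fun t ↦ le_of_ae_le_of_isOpen hcont₁ hcont₂ isOpen_univ ?_ t trivial
    filter_upwards [h.ode, hbdd] with t hode hα _
    rw [show deriv (deriv x) t + c * deriv x t = -(α t * x t) by linarith, abs_neg, abs_mul]
    exact mul_le_mul_of_nonneg_right (hα.trans (le_abs_self C)) (abs_nonneg _)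
  have hbound : ∀ t, ‖(deriv x t, deriv (deriv x) t)‖ ≤ (1 + |c| + |C|) * ‖(x t, deriv x t)‖ := by
    intro t
    simp only [Prod.norm_mk, Real.norm_eq_abs]
    have hx := le_max_left |x t| |deriv x t|
    have hx' := le_max_right |x t| |deriv x t|
    have hx'' : |deriv (deriv x) t| ≤ |C| * |x t| + |c| * |deriv x t| :=
      calc |deriv (deriv x) t| = |(deriv (deriv x) t + c * deriv x t) - c * deriv x t| := by
            ring_nf
        _ ≤ |C| * |x t| + |c| * |deriv x t| := by
            grw [abs_sub, hacc t, abs_mul]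
    refine max_le ?_ ?_ <;> nlinarith [abs_nonneg c, abs_nonneg C, abs_nonneg (x t)]
  funext t
  exact congrArg Prod.fst (eq_zero_of_norm_deriv_le_mul_norm (t₀ := t₀)
    (fun t ↦ (h.differentiable t).hasDerivAt.prodMk (h.differentiable_deriv t).hasDerivAt)
    hbound (by simp [h₀, h₀']) t)

theorem deriv_ne_zero (h : IsDampedHillSolution c α x) {C : ℝ} (hbdd : ∀ᵐ t, |α t| ≤ C)
    (hx : x ≠ 0) {t : ℝ} (h₀ : x t = 0) : deriv x t ≠ 0 :=
  fun h₀' ↦ hx (h.eq_zero_of_deriv_eq_zero hbdd h₀ h₀')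

theorem eventually_ne_zero_nhdsGT (h : IsDampedHillSolution c α x) {C : ℝ}
    (hbdd : ∀ᵐ t, |α t| ≤ C) (hx : x ≠ 0) {t : ℝ} (h₀ : x t = 0) : ∀ᶠ s in 𝓝[>] t, x s ≠ 0 :=
  ((h.differentiable t).hasDerivAt.eventually_ne (h.deriv_ne_zero hbdd hx h₀)).filter_mono
    (nhdsWithin_mono t fun _ hs ↦ ne_of_gt hs)

end IsDampedHillSolution

noncomputable def dampedWronskian (c : ℝ) (x₁ x₂ : ℝ → ℝ) (t : ℝ) : ℝ :=
  exp (c * t) * (x₁ t * deriv x₂ t - deriv x₁ t * x₂ t)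

theorem hasDerivAt_dampedWronskian {c t : ℝ} {x₁ x₂ : ℝ → ℝ} (h₁ : DifferentiableAt ℝ x₁ t)
    (h₁' : DifferentiableAt ℝ (deriv x₁) t) (h₂ : DifferentiableAt ℝ x₂ t)
    (h₂' : DifferentiableAt ℝ (deriv x₂) t) :
    HasDerivAt (dampedWronskian c x₁ x₂) (exp (c * t) * (c * (x₁ t * deriv x₂ t - deriv x₁ t * x₂ t)
      + (x₁ t * deriv (deriv x₂) t - deriv (deriv x₁) t * x₂ t))) t := by
  have hexp : HasDerivAt (fun t ↦ exp (c * t)) (exp (c * t) * c) t := by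
    simpa using ((hasDerivAt_id t).const_mul c).exp
  exact (hexp.mul ((h₁.hasDerivAt.mul h₂'.hasDerivAt).sub (h₁'.hasDerivAt.mul h₂.hasDerivAt)))
    |>.congr_deriv (by simp only [Pi.sub_apply, Pi.mul_apply]; ring)

theorem dampedWronskian_add_of_periodic {c T : ℝ} {x₁ x₂ : ℝ → ℝ} (hx₁ : Function.Periodic x₁ T)
    (hx₂ : Function.Periodic x₂ T) (t : ℝ) :
    dampedWronskian c x₁ x₂ (t + T) = exp (c * T) * dampedWronskian c x₁ x₂ t := by
  simp only [dampedWronskian, hx₁ t, hx₂ t, hx₁.deriv t, hx₂.deriv t, mul_add, exp_add]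
  ring

namespace IsDampedHillSolution

variable {c : ℝ} {α₁ α₂ x₁ x₂ : ℝ → ℝ}

theorem hasDerivAt_dampedWronskian (h₁ : IsDampedHillSolution c α₁ x₁)
    (h₂ : IsDampedHillSolution c α₂ x₂) (t : ℝ) :
    HasDerivAt (dampedWronskian c x₁ x₂) (exp (c * t) * (c * (x₁ t * deriv x₂ t - deriv x₁ t * x₂ t)
      + (x₁ t * deriv (deriv x₂) t - deriv (deriv x₁) t * x₂ t))) t :=
  _root_.hasDerivAt_dampedWronskian (h₁.differentiable t) (h₁.differentiable_deriv t)
    (h₂.differentiable t) (h₂.differentiable_deriv t)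

theorem continuous_deriv_dampedWronskian (h₁ : IsDampedHillSolution c α₁ x₁)
    (h₂ : IsDampedHillSolution c α₂ x₂) : Continuous (deriv (dampedWronskian c x₁ x₂)) := by
  have := h₁.contDiff.continuous; have := h₂.contDiff.continuous
  have := h₁.differentiable_deriv.continuous; have := h₂.differentiable_deriv.continuous
  have := h₁.continuous_deriv_deriv; have := h₂.continuous_deriv_deriv
  rw [funext fun t ↦ (h₁.hasDerivAt_dampedWronskian h₂ t).deriv]
  fun_prop

theorem deriv_dampedWronskian_ae (h₁ : IsDampedHillSolution c α₁ x₁)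
    (h₂ : IsDampedHillSolution c α₂ x₂) :
    ∀ᵐ t, deriv (dampedWronskian c x₁ x₂) t = exp (c * t) * ((α₁ t - α₂ t) * (x₁ t * x₂ t)) := by
  filter_upwards [h₁.ode, h₂.ode] with t hode₁ hode₂
  rw [(h₁.hasDerivAt_dampedWronskian h₂ t).deriv]
  linear_combination exp (c * t) * (x₁ t * hode₂ - x₂ t * hode₁)

variable {a b : ℝ}

theorem monotoneOn_dampedWronskian (h₁ : IsDampedHillSolution c α₁ x₁)
    (h₂ : IsDampedHillSolution c α₂ x₂)
    (hsign : ∀ᵐ t, t ∈ Ioo a b → 0 ≤ (α₁ t - α₂ t) * (x₁ t * x₂ t)) :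
    MonotoneOn (dampedWronskian c x₁ x₂) (Icc a b) := by
  have hnonneg : ∀ t ∈ Ioo a b, 0 ≤ deriv (dampedWronskian c x₁ x₂) t := by
    refine le_of_ae_le_of_isOpen continuous_const (h₁.continuous_deriv_dampedWronskian h₂)
      isOpen_Ioo ?_
    filter_upwards [h₁.deriv_dampedWronskian_ae h₂, hsign] with t hderiv hsign ht
    rw [hderiv]
    exact mul_nonneg (exp_pos _).le (hsign ht)
  exact monotoneOn_of_deriv_nonneg (convex_Icc a b)
    (fun t _ ↦ (h₁.hasDerivAt_dampedWronskian h₂ t).continuousAt.continuousWithinAt)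
    (fun t _ ↦ (h₁.hasDerivAt_dampedWronskian h₂ t).differentiableAt.differentiableWithinAt)
    (by rwa [interior_Icc])

theorem ae_mul_eq_zero_of_dampedWronskian_eq (h₁ : IsDampedHillSolution c α₁ x₁)
    (h₂ : IsDampedHillSolution c α₂ x₂)
    (hsign : ∀ᵐ t, t ∈ Ioo a b → 0 ≤ (α₁ t - α₂ t) * (x₁ t * x₂ t))
    (heq : dampedWronskian c x₁ x₂ a = dampedWronskian c x₁ x₂ b) :
    ∀ᵐ t, t ∈ Ioo a b → (α₁ t - α₂ t) * (x₁ t * x₂ t) = 0 := by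
  have hmono := h₁.monotoneOn_dampedWronskian h₂ hsign
  have hconst : ∀ t ∈ Icc a b, dampedWronskian c x₁ x₂ t = dampedWronskian c x₁ x₂ a :=
    fun t ht ↦ le_antisymm (heq ▸ hmono ht ⟨ht.1.trans ht.2, le_rfl⟩ ht.2)
      (hmono ⟨le_rfl, ht.1.trans ht.2⟩ ht ht.1)
  filter_upwards [h₁.deriv_dampedWronskian_ae h₂] with t hderiv ht
  have hloc : dampedWronskian c x₁ x₂ =ᶠ[𝓝 t] fun _ ↦ dampedWronskian c x₁ x₂ a :=
    Filter.mem_of_superset (Ioo_mem_nhds ht.1 ht.2) fun s hs ↦ hconst s (Ioo_subset_Icc_self hs)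
  rw [hloc.deriv_eq, deriv_const] at hderiv
  exact (mul_eq_zero.1 hderiv.symm).resolve_left (exp_pos _).ne'

end IsDampedHillSolution

namespace IsDampedHillSolution

variable {c ω a b : ℝ} {α x : ℝ → ℝ}

theorem sturm_gap_of_pos (h : IsDampedHillSolution c α x) (hω : 0 < ω)
    (hub : ∀ᵐ t, α t ≤ ω ^ 2 + c ^ 2 / 4) (hab : a < b) (ha : x a = 0) (hb : x b = 0)
    (hb' : deriv x b ≠ 0) (hpos : ∀ t ∈ Ioo a b, 0 < x t) :
    π / ω ≤ b - a ∧ (b - a = π / ω → ∀ᵐ t, t ∈ Ioo a b → α t = ω ^ 2 + c ^ 2 / 4) := by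
  set z : ℝ → ℝ := fun t ↦ exp (-(c / 2) * t) * Real.sin (ω * (t - a))
  have hz : IsDampedHillSolution c (fun _ ↦ ω ^ 2 + c ^ 2 / 4) z := by
    convert (sin ω a).exp_mul (-(c / 2)) using 2 <;> ring
  have hzpos : ∀ t ∈ Ioo a (a + π / ω), 0 < z t := fun t ht ↦
    mul_pos (exp_pos _) (sin_pos_of_pos_of_lt_pi (mul_pos hω (sub_pos.2 ht.1))
      (by rw [← lt_div_iff₀' hω]; linarith [ht.2]))
  have hWa : dampedWronskian c z x a = 0 := by simp [dampedWronskian, z, ha]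
  have hWb : dampedWronskian c z x b = exp (c * b) * (z b * deriv x b) := by
    simp [dampedWronskian, hb]
  have hx'b : deriv x b < 0 := lt_of_le_of_ne
    ((h.differentiable b).hasDerivAt.nonpos_of_eq_zero_of_pos_Ioo hab hb hpos) hb'
  have hsign (hle : b ≤ a + π / ω) :
      ∀ᵐ t, t ∈ Ioo a b → 0 ≤ (ω ^ 2 + c ^ 2 / 4 - α t) * (z t * x t) := by
    filter_upwards [hub] with t ht hmem
    exact mul_nonneg (sub_nonneg.2 ht)
      (mul_pos (hzpos t ⟨hmem.1, hmem.2.trans_le hle⟩) (hpos t hmem)).le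
  have hgap : π / ω ≤ b - a := by
    by_contra! hlt
    have hmono := hz.monotoneOn_dampedWronskian h (hsign (by linarith))
    have hWab := hmono ⟨le_rfl, hab.le⟩ ⟨hab.le, le_rfl⟩ hab.le
    rw [hWa, hWb] at hWab
    exact hWab.not_gt (mul_neg_of_pos_of_neg (exp_pos _)
      (mul_neg_of_pos_of_neg (hzpos b ⟨hab, by linarith⟩) hx'b))
  refine ⟨hgap, fun heq ↦ ?_⟩
  have hzb : z b = 0 := by
    simp [z, show ω * (b - a) = π by rw [heq]; field_simp, sin_pi]
  filter_upwards [hz.ae_mul_eq_zero_of_dampedWronskian_eq h (hsign (by linarith))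
    (by rw [hWa, hWb, hzb]; ring)] with t ht hmem
  have hzx : 0 < z t * x t := mul_pos (hzpos t ⟨hmem.1, by linarith [hmem.2]⟩) (hpos t hmem)
  linarith [(mul_eq_zero.1 (ht hmem)).resolve_right hzx.ne']

theorem sturm_gap (h : IsDampedHillSolution c α x) (hω : 0 < ω)
    (hub : ∀ᵐ t, α t ≤ ω ^ 2 + c ^ 2 / 4) (hab : a < b) (ha : x a = 0) (hb : x b = 0)
    (hb' : deriv x b ≠ 0) (hne : ∀ t ∈ Ioo a b, x t ≠ 0) :
    π / ω ≤ b - a ∧ (b - a = π / ω → ∀ᵐ t, t ∈ Ioo a b → α t = ω ^ 2 + c ^ 2 / 4) := by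
  rcases isPreconnected_Ioo.forall_pos_or_forall_neg h.contDiff.continuous.continuousOn hne
    with hpos | hneg
  · exact h.sturm_gap_of_pos hω hub hab ha hb hb' hpos
  · exact h.neg.sturm_gap_of_pos hω hub hab (by simp [ha]) (by simp [hb]) (by simpa using hb')
      fun t ht ↦ by simpa using hneg t ht

end IsDampedHillSolution

namespace IsDampedHillSolution

variable {c T : ℝ} {α α₁ α₂ x x₁ x₂ : ℝ → ℝ}

theorem ae_eq_of_periodic_of_eq_zero (h : IsDampedHillSolution c α x) {C : ℝ}
    (hbdd : ∀ᵐ t, |α t| ≤ C) (hT : 0 < T) (hα : Function.Periodic α T)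
    (hub : ∀ᵐ t, α t ≤ (2 * π / T) ^ 2 + c ^ 2 / 4) (hper : Function.Periodic x T) (hx : x ≠ 0)
    {t₀ : ℝ} (h₀ : x t₀ = 0) : ∀ᵐ t, α t = (2 * π / T) ^ 2 + c ^ 2 / 4 := by
  have hω : 0 < 2 * π / T := by positivity
  have hhalf : π / (2 * π / T) = T / 2 := by field_simp
  have hsimple : ∀ s, x s = 0 → deriv x s ≠ 0 := fun s hs ↦ h.deriv_ne_zero hbdd hx hs
  have hT₀ : x (t₀ + T) = 0 := (hper t₀).trans h₀
  obtain ⟨b, ⟨htb, hbT⟩, hxb, hneb⟩ := exists_first_zero h.contDiff.continuous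
    (by linarith : t₀ < t₀ + T) hT₀ (h.eventually_ne_zero_nhdsGT hbdd hx h₀)
  rcases hbT.eq_or_lt with rfl | hbT
  · -- `x` keeps a sign on `(t₀, t₀ + T)`, while `x'` takes the same nonzero value at both ends.
    have hderiv := mul_nonpos_of_hasDerivAt_of_ne_zero_Ioo (h.differentiable t₀).hasDerivAt
      (h.differentiable (t₀ + T)).hasDerivAt h.contDiff.continuous.continuousOn htb h₀ hxb hneb
    rw [hper.deriv t₀] at hderiv
    exact (hsimple t₀ h₀ (mul_self_eq_zero.1 (hderiv.antisymm (mul_self_nonneg _)))).elim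
  obtain ⟨b₂, ⟨hbb₂, hb₂T⟩, hxb₂, hneb₂⟩ := exists_first_zero h.contDiff.continuous hbT hT₀
    (h.eventually_ne_zero_nhdsGT hbdd hx hxb)
  obtain ⟨hgap₁, heq₁⟩ := h.sturm_gap hω hub htb h₀ hxb (hsimple b hxb) hneb
  obtain ⟨hgap₂, heq₂⟩ := h.sturm_gap hω hub hbb₂ hxb hxb₂ (hsimple b₂ hxb₂) hneb₂
  rw [hhalf] at hgap₁ hgap₂ heq₁ heq₂
  have hb₂ : b₂ = t₀ + T := by linarith
  refine Function.Periodic.ae_of_ae_Ioo (fun t ↦ by rw [hα t]) hT t₀ ?_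
  filter_upwards [heq₁ (by linarith), heq₂ (by linarith),
    compl_mem_ae_iff.2 (measure_singleton b)] with t h₁ h₂ hne hmem
  rcases lt_or_gt_of_ne hne with hlt | hgt
  · exact h₁ ⟨hmem.1, hlt⟩
  · exact h₂ ⟨hgt, hb₂ ▸ hmem.2⟩

theorem ae_eq_of_periodic_of_mul_pos (h₁ : IsDampedHillSolution c α₁ x₁)
    (h₂ : IsDampedHillSolution c α₂ x₂) (hT : 0 < T) (hα₁ : Function.Periodic α₁ T)
    (hα₂ : Function.Periodic α₂ T) (hx₁ : Function.Periodic x₁ T) (hx₂ : Function.Periodic x₂ T)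
    (h12 : ∀ᵐ t, α₁ t ≤ α₂ t) (hpos : ∀ t, 0 < x₁ t * x₂ t) : ∀ᵐ t, α₁ t = α₂ t := by
  have hx₁0 : ∀ t, x₁ t ≠ 0 := fun t h₀ ↦ by simpa [h₀] using hpos t
  -- Rolle's theorem for the periodic quotient `x₂ / x₁` gives a zero of the Wronskian.
  obtain ⟨t₀, -, ht₀⟩ := exists_hasDerivAt_eq_zero hT
    (h₂.contDiff.continuous.div h₁.contDiff.continuous hx₁0).continuousOn
    (by simp [hx₁.eq, hx₂.eq])
    fun t _ ↦ (h₂.differentiable t).hasDerivAt.div (h₁.differentiable t).hasDerivAt (hx₁0 t)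
  rw [div_eq_zero_iff, or_iff_left (pow_ne_zero 2 (hx₁0 t₀))] at ht₀
  have hW₀ : dampedWronskian c x₂ x₁ t₀ = 0 := by
    rw [dampedWronskian, show x₂ t₀ * deriv x₁ t₀ - deriv x₂ t₀ * x₁ t₀ = 0 by linarith, mul_zero]
  have hsign : ∀ᵐ t, t ∈ Ioo t₀ (t₀ + T) → 0 ≤ (α₂ t - α₁ t) * (x₂ t * x₁ t) := by
    filter_upwards [h12] with t ht _
    exact mul_nonneg (sub_nonneg.2 ht) (mul_comm (x₁ t) (x₂ t) ▸ hpos t).le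
  refine Function.Periodic.ae_of_ae_Ioo (fun t ↦ by rw [hα₁ t, hα₂ t]) hT t₀ ?_
  filter_upwards [h₂.ae_mul_eq_zero_of_dampedWronskian_eq h₁ hsign
    (by rw [dampedWronskian_add_of_periodic hx₂ hx₁, hW₀, mul_zero])] with t ht hmem
  have hx₂₁ : x₂ t * x₁ t ≠ 0 := (mul_comm (x₁ t) (x₂ t) ▸ hpos t).ne'
  linarith [(mul_eq_zero.1 (ht hmem)).resolve_right hx₂₁]

theorem ae_eq_of_periodic_of_mul_ne_zero (h₁ : IsDampedHillSolution c α₁ x₁)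
    (h₂ : IsDampedHillSolution c α₂ x₂) (hT : 0 < T) (hα₁ : Function.Periodic α₁ T)
    (hα₂ : Function.Periodic α₂ T) (hx₁ : Function.Periodic x₁ T) (hx₂ : Function.Periodic x₂ T)
    (h12 : ∀ᵐ t, α₁ t ≤ α₂ t) (hne : ∀ t, x₁ t * x₂ t ≠ 0) : ∀ᵐ t, α₁ t = α₂ t := by
  rcases isPreconnected_univ.forall_pos_or_forall_neg
    (h₁.contDiff.continuous.mul h₂.contDiff.continuous).continuousOn (fun t _ ↦ hne t)
    with hpos | hneg
  · exact h₁.ae_eq_of_periodic_of_mul_pos h₂ hT hα₁ hα₂ hx₁ hx₂ h12 fun t ↦ hpos t trivial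
  · exact h₁.ae_eq_of_periodic_of_mul_pos h₂.neg hT hα₁ hα₂ hx₁ (fun t ↦ by simp [hx₂ t]) h12
      fun t ↦ by simpa using hneg t trivial

end IsDampedHillSolution

theorem stmt5_general (c T : ℝ) (hT : 0 < T) (α₁ α₂ : ℝ → ℝ)
    (hper₁ : Function.Periodic α₁ T) (hper₂ : Function.Periodic α₂ T)
    (hbdd₁ : ∃ C : ℝ, ∀ᵐ t ∂(volume : Measure ℝ), |α₁ t| ≤ C)
    (hbdd₂ : ∃ C : ℝ, ∀ᵐ t ∂(volume : Measure ℝ), |α₂ t| ≤ C)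
    (h12 : ∀ᵐ t ∂(volume : Measure ℝ), α₁ t ≤ α₂ t)
    (h12strict : 0 < volume {t ∈ Icc (0 : ℝ) T | α₁ t < α₂ t})
    (hub : ∀ᵐ t ∂(volume : Measure ℝ), α₂ t ≤ (2 * π) ^ 2 / T ^ 2 + c ^ 2 / 4)
    (hubstrict : 0 < volume {t ∈ Icc (0 : ℝ) T | α₂ t < (2 * π) ^ 2 / T ^ 2 + c ^ 2 / 4}) :
    ¬ ((∃ x₁ : ℝ → ℝ, ContDiff ℝ 2 x₁ ∧ Function.Periodic x₁ T ∧ (∃ t, x₁ t ≠ 0) ∧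
          ∀ᵐ t ∂(volume : Measure ℝ),
            deriv (deriv x₁) t + c * deriv x₁ t + α₁ t * x₁ t = 0) ∧
        (∃ x₂ : ℝ → ℝ, ContDiff ℝ 2 x₂ ∧ Function.Periodic x₂ T ∧ (∃ t, x₂ t ≠ 0) ∧
          ∀ᵐ t ∂(volume : Measure ℝ),
            deriv (deriv x₂) t + c * deriv x₂ t + α₂ t * x₂ t = 0)) := by
  rintro ⟨⟨x₁, hx₁, hpx₁, hnt₁, hode₁⟩, ⟨x₂, hx₂, hpx₂, hnt₂, hode₂⟩⟩
  have h₁ : IsDampedHillSolution c α₁ x₁ := ⟨hx₁, hode₁⟩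
  have h₂ : IsDampedHillSolution c α₂ x₂ := ⟨hx₂, hode₂⟩
  obtain ⟨C₁, hC₁⟩ := hbdd₁
  obtain ⟨C₂, hC₂⟩ := hbdd₂
  rw [← div_pow] at hub hubstrict
  have hub₁ : ∀ᵐ t, α₁ t ≤ (2 * π / T) ^ 2 + c ^ 2 / 4 := by
    filter_upwards [h12, hub] with t h h'
    linarith
  have hα₂ : ¬ ∀ᵐ t, α₂ t = (2 * π / T) ^ 2 + c ^ 2 / 4 := not_ae_eq_of_measure_pos hubstrict
  have hnz₁ : ∀ t, x₁ t ≠ 0 := fun t₀ h₀ ↦ hα₂ <| by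
    filter_upwards [h₁.ae_eq_of_periodic_of_eq_zero hC₁ hT hper₁ hub₁ hpx₁
      (Function.ne_iff.2 hnt₁) h₀, h12, hub] with t h h' h''
    linarith
  have hnz₂ : ∀ t, x₂ t ≠ 0 := fun t₀ h₀ ↦ hα₂ <|
    h₂.ae_eq_of_periodic_of_eq_zero hC₂ hT hper₂ hub hpx₂ (Function.ne_iff.2 hnt₂) h₀
  exact not_ae_eq_of_measure_pos h12strict <| h₁.ae_eq_of_periodic_of_mul_ne_zero h₂ hT hper₁
    hper₂ hpx₁ hpx₂ h12 fun t ↦ mul_ne_zero (hnz₁ t) (hnz₂ t)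

/-- If `α₁ ≪ α₂ ≪ (2π)²/T² + c²/4`, then the equations `x'' + c x' + αᵢ x = 0` cannot both
admit nontrivial `T`-periodic solutions. -/
theorem stmt5 (c T : ℝ) (hT : 0 < T) (α₁ α₂ : ℝ → ℝ)
    (hmeas₁ : Measurable α₁) (hmeas₂ : Measurable α₂)
    (hper₁ : Function.Periodic α₁ T) (hper₂ : Function.Periodic α₂ T)
    (hbdd₁ : ∃ C : ℝ, ∀ᵐ t ∂(volume : Measure ℝ), |α₁ t| ≤ C)
    (hbdd₂ : ∃ C : ℝ, ∀ᵐ t ∂(volume : Measure ℝ), |α₂ t| ≤ C)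
    (h12 : ∀ᵐ t ∂(volume : Measure ℝ), α₁ t ≤ α₂ t)
    (h12strict : 0 < volume {t ∈ Icc (0 : ℝ) T | α₁ t < α₂ t})
    (hub : ∀ᵐ t ∂(volume : Measure ℝ), α₂ t ≤ (2 * π) ^ 2 / T ^ 2 + c ^ 2 / 4)
    (hubstrict : 0 < volume {t ∈ Icc (0 : ℝ) T | α₂ t < (2 * π) ^ 2 / T ^ 2 + c ^ 2 / 4}) :
    ¬ ((∃ x₁ : ℝ → ℝ, ContDiff ℝ 2 x₁ ∧ Function.Periodic x₁ T ∧ (∃ t, x₁ t ≠ 0) ∧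
          ∀ᵐ t ∂(volume : Measure ℝ),
            deriv (deriv x₁) t + c * deriv x₁ t + α₁ t * x₁ t = 0) ∧
        (∃ x₂ : ℝ → ℝ, ContDiff ℝ 2 x₂ ∧ Function.Periodic x₂ T ∧ (∃ t, x₂ t ≠ 0) ∧
          ∀ᵐ t ∂(volume : Measure ℝ),
            deriv (deriv x₂) t + c * deriv x₂ t + α₂ t * x₂ t = 0)) :=
  stmt5_general c T hT α₁ α₂ hper₁ hper₂ hbdd₁ hbdd₂ h12 h12strict hub hubstrict
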